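/- arXiv:1905.02817 — 7 statements merged into one kernel-verified Lean document; each statement's English description precedes it below -/
import Mathlib

section
/- Suppose (x1*, z1*) satisfies the first-order conditions (1 − σ)·(p(x1* + x2*) + x1*·p′(x1* + x2*)) = C′(x1*) and q·F′(x1*·p(x1* + x2*) − z1*) = (1 − q)·σ. If in addition F″(x1*·p(x1* + x2*) − z1*) > 0 and 2·p′(x1* + x2*) + x1*·p″(x1* + x2*) − C″(x1*)/(1 − σ) < 0, then the function of two real variables (x1, z1) ↦ P(x1, x2*, z1) has a local maximum at (x1*, z1*). -/
/-!
Substituting `w = x₁ p(x₁ + x₂*) - z₁` splits the profit as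
`P = [(1 - σ) x₁ p(x₁ + x₂*) - C(x₁)] + [(1 - q) σ w - q F(w)]`,
a function of `x₁` alone plus a function of `w` alone. The two first-order conditions and the two
second-order conditions are exactly the one-variable second-derivative tests for these summands,
so each has a local maximum, and the sum, composed with the continuous map `(x₁, z₁) ↦ (x₁, w)`,
has a local maximum at `(x₁*, z₁*)`.
-/

open Filter

section SecondDerivative

variable {p : ℝ → ℝ} {c : ℝ}

lemma hasDerivAt_mul_comp_add_const {x : ℝ} (hp : DifferentiableAt ℝ p (x + c)) :
    HasDerivAt (fun y => y * p (y + c)) (p (x + c) + x * deriv p (x + c)) x := by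
  simpa using (hasDerivAt_id x).fun_mul (hp.hasDerivAt.comp_add_const x c)

lemma hasDerivAt_add_mul_deriv_comp_add_const (hp : ContDiff ℝ 2 p) (x : ℝ) :
    HasDerivAt (fun y => p (y + c) + y * deriv p (y + c))
      (2 * deriv p (x + c) + x * deriv (deriv p) (x + c)) x := by
  have hshift := ((hp.differentiable two_ne_zero) (x + c)).hasDerivAt.comp_add_const x c
  have hmul := hasDerivAt_mul_comp_add_const (c := c) (hp.differentiable_deriv_two (x + c))
  exact (hshift.fun_add hmul).congr_deriv (by ring)

end SecondDerivative

lemma isLocalMax_scaled_revenue_sub_cost {s c x : ℝ} {p C : ℝ → ℝ} (hs : 0 < s)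
    (hp : ContDiff ℝ 2 p) (hC : ContDiff ℝ 2 C)
    (hfoc : s * (p (x + c) + x * deriv p (x + c)) = deriv C x)
    (hsoc : 2 * deriv p (x + c) + x * deriv (deriv p) (x + c) - deriv (deriv C) x / s < 0) :
    IsLocalMax (fun y => s * (y * p (y + c)) - C y) x := by
  have hderiv : deriv (fun y => s * (y * p (y + c)) - C y)
      = fun y => s * (p (y + c) + y * deriv p (y + c)) - deriv C y :=
    funext fun y => ((hasDerivAt_mul_comp_add_const ((hp.differentiable two_ne_zero) (y + c))
      |>.const_mul s).fun_sub ((hC.differentiable two_ne_zero) y).hasDerivAt).deriv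
  have hderiv2 : deriv (deriv fun y => s * (y * p (y + c)) - C y) x
      = s * (2 * deriv p (x + c) + x * deriv (deriv p) (x + c)) - deriv (deriv C) x := by
    rw [hderiv]
    exact (((hasDerivAt_add_mul_deriv_comp_add_const hp x).const_mul s).fun_sub
      (hC.differentiable_deriv_two x).hasDerivAt).deriv
  have hpcont := hp.continuous
  have hCcont := hC.continuous
  refine isLocalMax_of_deriv_deriv_neg ?_ ?_ (by fun_prop)
  · have := mul_neg_of_pos_of_neg hs hsoc
    rwa [hderiv2, ← mul_div_cancel₀ (deriv (deriv C) x) hs.ne', ← mul_sub]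
  · rw [hderiv]
    exact sub_eq_zero.mpr hfoc

lemma isLocalMax_linear_sub_const_mul {a q w : ℝ} {F : ℝ → ℝ} (hq : 0 < q)
    (hF : ContDiff ℝ 2 F) (hfoc : q * deriv F w = a) (hsoc : 0 < deriv (deriv F) w) :
    IsLocalMax (fun v => a * v - q * F v) w := by
  have hderiv : deriv (fun v => a * v - q * F v) = fun v => a - q * deriv F v := by
    funext v
    simpa using (((hasDerivAt_id v).const_mul a).fun_sub
      (((hF.differentiable two_ne_zero) v).hasDerivAt.const_mul q)).deriv
  have hFcont := hF.continuous
  refine isLocalMax_of_deriv_deriv_neg ?_ ?_ (by fun_prop)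
  · rw [hderiv, ((hF.differentiable_deriv_two w).hasDerivAt.const_mul q).const_sub a |>.deriv]
    exact neg_neg_of_pos (mul_pos hq hsoc)
  · rw [hderiv]
    exact sub_eq_zero.mpr hfoc.symm

theorem stmt_0_general (σ q x2s : ℝ) (hσ1 : σ < 1) (hq0 : 0 < q)
    (p C F : ℝ → ℝ) (hp : ContDiff ℝ 2 p) (hC : ContDiff ℝ 2 C) (hF : ContDiff ℝ 2 F)
    (x1s z1s : ℝ)
    (hfoc1 : (1 - σ) * (p (x1s + x2s) + x1s * deriv p (x1s + x2s)) = deriv C x1s)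
    (hfoc2 : q * deriv F (x1s * p (x1s + x2s) - z1s) = (1 - q) * σ)
    (hF2 : 0 < deriv (deriv F) (x1s * p (x1s + x2s) - z1s))
    (hconc : 2 * deriv p (x1s + x2s) + x1s * deriv (deriv p) (x1s + x2s)
        - deriv (deriv C) x1s / (1 - σ) < 0) :
    IsLocalMax (fun v : ℝ × ℝ =>
      (1 - q * σ) * v.1 * p (v.1 + x2s) - C v.1 - (1 - q) * σ * v.2
        - q * F (v.1 * p (v.1 + x2s) - v.2)) (x1s, z1s) := by
  have hx := isLocalMax_scaled_revenue_sub_cost (sub_pos.mpr hσ1) hp hC hfoc1 hconc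
  have hw := isLocalMax_linear_sub_const_mul hq0 hF hfoc2 hF2
  have hgap : ContinuousAt (fun v : ℝ × ℝ => v.1 * p (v.1 + x2s) - v.2) (x1s, z1s) := by
    have := hp.continuous
    fun_prop
  refine ((hx.comp_continuous continuousAt_fst).add
    (hw.comp_continuous (g := fun v : ℝ × ℝ => v.1 * p (v.1 + x2s) - v.2) hgap)).congr
    (Eventually.of_forall fun v => ?_)
  simp only [Function.comp_apply]
  ring

/-- If `(x1*, z1*)` satisfies the first-order conditions and
`F'' > 0` at the relevant point and
`2 p' + x1* p'' - C''/(1-σ) < 0`, then the profit function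
`(x1, z1) ↦ P(x1, x2*, z1)` has a local maximum at `(x1*, z1*)`. -/
theorem stmt_0 (σ q x2s : ℝ) (hσ0 : 0 < σ) (hσ1 : σ < 1) (hq0 : 0 < q) (hq1 : q < 1)
    (p C F : ℝ → ℝ) (hp : ContDiff ℝ 2 p) (hC : ContDiff ℝ 2 C) (hF : ContDiff ℝ 2 F)
    (x1s z1s : ℝ)
    (hfoc1 : (1 - σ) * (p (x1s + x2s) + x1s * deriv p (x1s + x2s)) = deriv C x1s)
    (hfoc2 : q * deriv F (x1s * p (x1s + x2s) - z1s) = (1 - q) * σ)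
    (hF2 : 0 < deriv (deriv F) (x1s * p (x1s + x2s) - z1s))
    (hconc : 2 * deriv p (x1s + x2s) + x1s * deriv (deriv p) (x1s + x2s)
        - deriv (deriv C) x1s / (1 - σ) < 0) :
    IsLocalMax (fun v : ℝ × ℝ =>
      (1 - q * σ) * v.1 * p (v.1 + x2s) - C v.1 - (1 - q) * σ * v.2
        - q * F (v.1 * p (v.1 + x2s) - v.2)) (x1s, z1s) :=
  stmt_0_general σ q x2s hσ1 hq0 p C F hp hC hF x1s z1s hfoc1 hfoc2 hF2 hconc
end

section
/- Let (x1, x2, z1) be a point satisfying q·F′(x1·p(x1 + x2) − z1) = (1 − q)·σ and suppose F″(x1·p(x1 + x2) − z1) > 0. Then the inequality (In2): P_{x1x1}·P_{z1z1} − (P_{x1z1})² > |P_{x1x2}·P_{z1z1} − P_{x1z1}·P_{x2z1}| holds at this point if and only if −(2·p′(x1 + x2) + x1·p″(x1 + x2) − C″(x1)/(1 − σ)) > |p′(x1 + x2) + x1·p″(x1 + x2)|, where subscripts on P denote iterated partial derivatives evaluated at (x1, x2, z1). -/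
/-!
Write `r = x1 p(x1 + x2)` for revenue and `B = q F''(r - z1) > 0`. Differentiating twice, every
second partial of `P` is affine in `B`, and the first-order condition `q F' = (1 - q) σ` collapses
the marginal coefficient `1 - qσ - qF'` of the second derivatives of `r` to `1 - σ`:
`P_{x1x1} = (1 - σ) r_{11} - C'' - B r_1²`, `P_{z1z1} = -B`, `P_{x1z1} = B r_1`,
`P_{x1x2} = (1 - σ) r_{12} - B r_1 r_2`, `P_{x2z1} = B r_2`.
In both sides of (In2) the `B²` terms cancel, leaving `B (1 - σ)` times the two sides of the
claimed inequality, with `r_{11} = 2p' + x1 p''` and `r_{12} = p' + x1 p''`.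
-/

/-- The profit function
`P(x1, x2, z1) = (1 - qσ) x1 p(x1+x2) - C(x1) - (1-q)σ z1 - q F(x1 p(x1+x2) - z1)`. -/
noncomputable def P (σ q : ℝ) (p C F : ℝ → ℝ) (x1 x2 z1 : ℝ) : ℝ :=
  (1 - q * σ) * x1 * p (x1 + x2) - C x1 - (1 - q) * σ * z1
    - q * F (x1 * p (x1 + x2) - z1)

/-- `∂²P/∂x1²` at `(x1, x2, z1)`. -/
noncomputable def Px1x1 (σ q : ℝ) (p C F : ℝ → ℝ) (x1 x2 z1 : ℝ) : ℝ :=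
  deriv (deriv (fun v => P σ q p C F v x2 z1)) x1

/-- `∂²P/∂z1²` at `(x1, x2, z1)`. -/
noncomputable def Pz1z1 (σ q : ℝ) (p C F : ℝ → ℝ) (x1 x2 z1 : ℝ) : ℝ :=
  deriv (deriv (fun w => P σ q p C F x1 x2 w)) z1

/-- `∂²P/∂x1∂z1` at `(x1, x2, z1)` (first differentiate in `x1`, then in `z1`). -/
noncomputable def Px1z1 (σ q : ℝ) (p C F : ℝ → ℝ) (x1 x2 z1 : ℝ) : ℝ :=
  deriv (fun w => deriv (fun v => P σ q p C F v x2 w) x1) z1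

/-- `∂²P/∂x1∂x2` at `(x1, x2, z1)` (first differentiate in `x1`, then in `x2`). -/
noncomputable def Px1x2 (σ q : ℝ) (p C F : ℝ → ℝ) (x1 x2 z1 : ℝ) : ℝ :=
  deriv (fun u => deriv (fun v => P σ q p C F v u z1) x1) x2

/-- `∂²P/∂x2∂z1` at `(x1, x2, z1)` (first differentiate in `x2`, then in `z1`). -/
noncomputable def Px2z1 (σ q : ℝ) (p C F : ℝ → ℝ) (x1 x2 z1 : ℝ) : ℝ :=
  deriv (fun w => deriv (fun u => P σ q p C F x1 u w) x2) z1

theorem hasDerivAt_mul_comp_add {𝕜 : Type*} [NontriviallyNormedField 𝕜] {f : 𝕜 → 𝕜} {u v : 𝕜}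
    (hf : DifferentiableAt 𝕜 f (v + u)) :
    HasDerivAt (fun v => v * f (v + u)) (f (v + u) + v * deriv f (v + u)) v := by
  refine ((hasDerivAt_id' v).mul (hf.hasDerivAt.comp_add_const v u)).congr_deriv ?_
  rw [one_mul]

section

variable {σ q : ℝ} {p C F : ℝ → ℝ}

theorem hasDerivAt_P_x1 {x1 x2 z1 : ℝ} (hp : DifferentiableAt ℝ p (x1 + x2))
    (hC : DifferentiableAt ℝ C x1) (hF : DifferentiableAt ℝ F (x1 * p (x1 + x2) - z1)) :
    HasDerivAt (fun v => P σ q p C F v x2 z1)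
      ((1 - q * σ - q * deriv F (x1 * p (x1 + x2) - z1)) * (p (x1 + x2) + x1 * deriv p (x1 + x2))
        - deriv C x1) x1 := by
  have hr := hasDerivAt_mul_comp_add hp
  have hFr := hF.hasDerivAt.comp x1 (hr.sub_const z1)
  have h := (((hr.const_mul (1 - q * σ)).sub hC.hasDerivAt).sub_const
    ((1 - q) * σ * z1)).sub (hFr.const_mul q)
  unfold P
  simp only [mul_assoc (1 - q * σ)]
  refine h.congr_deriv ?_
  ring

theorem hasDerivAt_P_x2 {x1 x2 z1 : ℝ} (hp : DifferentiableAt ℝ p (x1 + x2))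
    (hF : DifferentiableAt ℝ F (x1 * p (x1 + x2) - z1)) :
    HasDerivAt (fun u => P σ q p C F x1 u z1)
      ((1 - q * σ - q * deriv F (x1 * p (x1 + x2) - z1)) * (x1 * deriv p (x1 + x2))) x2 := by
  have hr := (hp.hasDerivAt.comp_const_add x1 x2).const_mul x1
  have hFr := hF.hasDerivAt.comp x2 (hr.sub_const z1)
  have h := (((hr.const_mul (1 - q * σ)).sub_const (C x1)).sub_const ((1 - q) * σ * z1)).sub
    (hFr.const_mul q)
  unfold P
  simp only [mul_assoc (1 - q * σ)]
  refine h.congr_deriv ?_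
  ring

theorem hasDerivAt_P_z1 {x1 x2 z1 : ℝ} (hF : DifferentiableAt ℝ F (x1 * p (x1 + x2) - z1)) :
    HasDerivAt (fun w => P σ q p C F x1 x2 w)
      (q * deriv F (x1 * p (x1 + x2) - z1) - (1 - q) * σ) z1 := by
  have hFr := hF.hasDerivAt.comp_const_sub (x1 * p (x1 + x2)) z1
  have h := (((hasDerivAt_id' z1).const_mul ((1 - q) * σ)).const_sub
    ((1 - q * σ) * x1 * p (x1 + x2) - C x1)).sub (hFr.const_mul q)
  refine h.congr_deriv ?_
  ring

variable (x1 x2 z1 : ℝ)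

theorem Px1x1_eq (hp : ContDiff ℝ 2 p) (hC : ContDiff ℝ 2 C) (hF : ContDiff ℝ 2 F) :
    Px1x1 σ q p C F x1 x2 z1 =
      (1 - q * σ - q * deriv F (x1 * p (x1 + x2) - z1))
          * (2 * deriv p (x1 + x2) + x1 * deriv (deriv p) (x1 + x2))
        - deriv (deriv C) x1
        - q * deriv (deriv F) (x1 * p (x1 + x2) - z1)
          * (p (x1 + x2) + x1 * deriv p (x1 + x2)) ^ 2 := by
  have hd : deriv (fun v => P σ q p C F v x2 z1) = fun v =>
      (1 - q * σ - q * deriv F (v * p (v + x2) - z1)) * (p (v + x2) + v * deriv p (v + x2))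
        - deriv C v := funext fun v =>
    (hasDerivAt_P_x1 (hp.differentiable two_ne_zero _) (hC.differentiable two_ne_zero _)
      (hF.differentiable two_ne_zero _)).deriv
  have hr := hasDerivAt_mul_comp_add (hp.differentiable two_ne_zero (x1 + x2))
  have hr' := ((hp.differentiable two_ne_zero _).hasDerivAt.comp_add_const x1 x2).add
    (hasDerivAt_mul_comp_add (hp.differentiable_deriv_two (x1 + x2)))
  have hF' := (hF.differentiable_deriv_two _).hasDerivAt.comp x1 (hr.sub_const z1)
  have h := (((hF'.const_mul q).const_sub (1 - q * σ)).mul hr').sub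
    (hC.differentiable_deriv_two x1).hasDerivAt
  rw [Px1x1, hd]
  refine h.deriv.trans ?_
  simp only [Pi.add_apply, Function.comp_apply]
  ring

theorem Pz1z1_eq (hF : ContDiff ℝ 2 F) :
    Pz1z1 σ q p C F x1 x2 z1 = -(q * deriv (deriv F) (x1 * p (x1 + x2) - z1)) := by
  have hd : deriv (fun w => P σ q p C F x1 x2 w) = fun w =>
      q * deriv F (x1 * p (x1 + x2) - w) - (1 - q) * σ := funext fun w =>
    (hasDerivAt_P_z1 (hF.differentiable two_ne_zero _)).deriv
  have hF' := (hF.differentiable_deriv_two _).hasDerivAt.comp_const_sub (x1 * p (x1 + x2)) z1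
  have h := (hF'.const_mul q).sub_const ((1 - q) * σ)
  rw [Pz1z1, hd, h.deriv]
  ring

theorem Px1z1_eq (hp : ContDiff ℝ 2 p) (hC : ContDiff ℝ 2 C) (hF : ContDiff ℝ 2 F) :
    Px1z1 σ q p C F x1 x2 z1 =
      q * deriv (deriv F) (x1 * p (x1 + x2) - z1) * (p (x1 + x2) + x1 * deriv p (x1 + x2)) := by
  have hd : (fun w => deriv (fun v => P σ q p C F v x2 w) x1) = fun w =>
      (1 - q * σ - q * deriv F (x1 * p (x1 + x2) - w)) * (p (x1 + x2) + x1 * deriv p (x1 + x2))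
        - deriv C x1 := funext fun w =>
    (hasDerivAt_P_x1 (hp.differentiable two_ne_zero _) (hC.differentiable two_ne_zero _)
      (hF.differentiable two_ne_zero _)).deriv
  have hF' := (hF.differentiable_deriv_two _).hasDerivAt.comp_const_sub (x1 * p (x1 + x2)) z1
  have h := (((hF'.const_mul q).const_sub (1 - q * σ)).mul_const
    (p (x1 + x2) + x1 * deriv p (x1 + x2))).sub_const (deriv C x1)
  rw [Px1z1, hd, h.deriv]
  ring

theorem Px1x2_eq (hp : ContDiff ℝ 2 p) (hC : ContDiff ℝ 2 C) (hF : ContDiff ℝ 2 F) :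
    Px1x2 σ q p C F x1 x2 z1 =
      (1 - q * σ - q * deriv F (x1 * p (x1 + x2) - z1))
          * (deriv p (x1 + x2) + x1 * deriv (deriv p) (x1 + x2))
        - q * deriv (deriv F) (x1 * p (x1 + x2) - z1) * (x1 * deriv p (x1 + x2))
          * (p (x1 + x2) + x1 * deriv p (x1 + x2)) := by
  have hd : (fun u => deriv (fun v => P σ q p C F v u z1) x1) = fun u =>
      (1 - q * σ - q * deriv F (x1 * p (x1 + u) - z1)) * (p (x1 + u) + x1 * deriv p (x1 + u))
        - deriv C x1 := funext fun u =>
    (hasDerivAt_P_x1 (hp.differentiable two_ne_zero _) (hC.differentiable two_ne_zero _)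
      (hF.differentiable two_ne_zero _)).deriv
  have hp1 := (hp.differentiable two_ne_zero _).hasDerivAt.comp_const_add x1 x2
  have hp2 := (hp.differentiable_deriv_two _).hasDerivAt.comp_const_add x1 x2
  have hF' := (hF.differentiable_deriv_two _).hasDerivAt.comp x2
    ((hp1.const_mul x1).sub_const z1)
  have h := (((hF'.const_mul q).const_sub (1 - q * σ)).mul
    (hp1.add (hp2.const_mul x1))).sub_const (deriv C x1)
  rw [Px1x2, hd]
  refine h.deriv.trans ?_
  simp only [Pi.add_apply, Function.comp_apply]
  ring

theorem Px2z1_eq (hp : ContDiff ℝ 2 p) (hF : ContDiff ℝ 2 F) :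
    Px2z1 σ q p C F x1 x2 z1 =
      q * deriv (deriv F) (x1 * p (x1 + x2) - z1) * (x1 * deriv p (x1 + x2)) := by
  have hd : (fun w => deriv (fun u => P σ q p C F x1 u w) x2) = fun w =>
      (1 - q * σ - q * deriv F (x1 * p (x1 + x2) - w)) * (x1 * deriv p (x1 + x2)) :=
    funext fun w =>
      (hasDerivAt_P_x2 (hp.differentiable two_ne_zero _) (hF.differentiable two_ne_zero _)).deriv
  have hF' := (hF.differentiable_deriv_two _).hasDerivAt.comp_const_sub (x1 * p (x1 + x2)) z1
  have h := ((hF'.const_mul q).const_sub (1 - q * σ)).mul_const (x1 * deriv p (x1 + x2))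
  rw [Px2z1, hd, h.deriv]
  ring

end

theorem hessian_minors_gt_abs_iff {B c D K A s t : ℝ} (hB : 0 < B) (hc : 0 < c) :
    (c * D - K - B * s ^ 2) * -B - (B * s) ^ 2 > |(c * A - B * t * s) * -B - B * s * (B * t)|
      ↔ -(D - K / c) > |A| := by
  have hminor : (c * D - K - B * s ^ 2) * -B - (B * s) ^ 2 = B * c * -(D - K / c) := by
    field_simp
    ring
  have hcross : (c * A - B * t * s) * -B - B * s * (B * t) = B * c * -A := by ring
  rw [hminor, hcross, abs_mul, abs_neg, abs_of_pos (mul_pos hB hc), gt_iff_lt, gt_iff_lt]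
  exact mul_lt_mul_iff_right₀ (mul_pos hB hc)

theorem stmt_2_general (σ q : ℝ) (hσ1 : σ < 1) (hq0 : 0 < q)
    (p C F : ℝ → ℝ) (hp : ContDiff ℝ 2 p) (hC : ContDiff ℝ 2 C) (hF : ContDiff ℝ 2 F)
    (x1 x2 z1 : ℝ)
    (hfoc2 : q * deriv F (x1 * p (x1 + x2) - z1) = (1 - q) * σ)
    (hF2 : 0 < deriv (deriv F) (x1 * p (x1 + x2) - z1)) :
    (Px1x1 σ q p C F x1 x2 z1 * Pz1z1 σ q p C F x1 x2 z1
        - (Px1z1 σ q p C F x1 x2 z1) ^ 2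
      > |Px1x2 σ q p C F x1 x2 z1 * Pz1z1 σ q p C F x1 x2 z1
          - Px1z1 σ q p C F x1 x2 z1 * Px2z1 σ q p C F x1 x2 z1|)
    ↔ (-(2 * deriv p (x1 + x2) + x1 * deriv (deriv p) (x1 + x2)
          - deriv (deriv C) x1 / (1 - σ))
        > |deriv p (x1 + x2) + x1 * deriv (deriv p) (x1 + x2)|) := by
  have hmargin : 1 - q * σ - q * deriv F (x1 * p (x1 + x2) - z1) = 1 - σ := by
    linear_combination -hfoc2
  rw [Px1x1_eq x1 x2 z1 hp hC hF, Pz1z1_eq x1 x2 z1 hF, Px1z1_eq x1 x2 z1 hp hC hF,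
    Px1x2_eq x1 x2 z1 hp hC hF, Px2z1_eq x1 x2 z1 hp hF, hmargin]
  exact hessian_minors_gt_abs_iff (mul_pos hq0 hF2) (sub_pos.2 hσ1)

/-- at a point satisfying the first-order condition for `z1` with
`F'' > 0` there, inequality (In2) holds iff
`-(2p' + x1 p'' - C''/(1-σ)) > |p' + x1 p''|`. -/
theorem stmt_2 (σ q : ℝ) (hσ0 : 0 < σ) (hσ1 : σ < 1) (hq0 : 0 < q) (hq1 : q < 1)
    (p C F : ℝ → ℝ) (hp : ContDiff ℝ 2 p) (hC : ContDiff ℝ 2 C) (hF : ContDiff ℝ 2 F)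
    (x1 x2 z1 : ℝ)
    (hfoc2 : q * deriv F (x1 * p (x1 + x2) - z1) = (1 - q) * σ)
    (hF2 : 0 < deriv (deriv F) (x1 * p (x1 + x2) - z1)) :
    (Px1x1 σ q p C F x1 x2 z1 * Pz1z1 σ q p C F x1 x2 z1
        - (Px1z1 σ q p C F x1 x2 z1) ^ 2
      > |Px1x2 σ q p C F x1 x2 z1 * Pz1z1 σ q p C F x1 x2 z1
          - Px1z1 σ q p C F x1 x2 z1 * Px2z1 σ q p C F x1 x2 z1|)
    ↔ (-(2 * deriv p (x1 + x2) + x1 * deriv (deriv p) (x1 + x2)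
          - deriv (deriv C) x1 / (1 - σ))
        > |deriv p (x1 + x2) + x1 * deriv (deriv p) (x1 + x2)|) :=
  stmt_2_general σ q hσ1 hq0 p C F hp hC hF x1 x2 z1 hfoc2 hF2
end

section
/- Assume that for i = 1, 2 the inequalities (In2)_i: A_i·Z_i − M_i² > |B_i·Z_i − M_i·N_i| and (In3)_i: −A_i ≥ |B_i| hold. Write p1(λ)·p2(λ) − g1(λ)·g2(λ) = λ⁴ + α3·λ³ + α2·λ² + α1·λ + α0. Then α3 > 0, α1 > 0 and α0 > 0. -/
/-- under (In2) and (In3) for `i = 1, 2`, the coefficients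
`α3, α1, α0` of the quartic `p1 p2 - g1 g2` are positive. -/
theorem stmt_8 (A1 Z1 M1 B1 N1 A2 Z2 M2 B2 N2 k1 k2 k3 k4 : ℝ)
    (hk1 : 0 < k1) (hk2 : 0 < k2) (hk3 : 0 < k3) (hk4 : 0 < k4)
    (hIn2₁ : A1 * Z1 - M1 ^ 2 > |B1 * Z1 - M1 * N1|) (hIn3₁ : -A1 ≥ |B1|)
    (hIn2₂ : A2 * Z2 - M2 ^ 2 > |B2 * Z2 - M2 * N2|) (hIn3₂ : -A2 ≥ |B2|)
    (α0 α1 α2 α3 : ℝ)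
    (hcoef : ∀ l : ℝ,
      (l ^ 2 - (k1 * A1 + k3 * Z1) * l + k1 * k3 * (A1 * Z1 - M1 ^ 2))
          * (l ^ 2 - (k2 * A2 + k4 * Z2) * l + k2 * k4 * (A2 * Z2 - M2 ^ 2))
        - (k1 * B1 * l - k1 * k3 * B1 * Z1 + k1 * k3 * M1 * N1)
          * (k2 * B2 * l - k2 * k4 * B2 * Z2 + k2 * k4 * M2 * N2)
      = l ^ 4 + α3 * l ^ 3 + α2 * l ^ 2 + α1 * l + α0) :
    α3 > 0 ∧ α1 > 0 ∧ α0 > 0 := by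
  have h0 := hcoef 0
  have h1 := hcoef 1
  have hm1 := hcoef (-1)
  have h2 := hcoef 2
  have hm2 := hcoef (-2)
  -- coefficient formulas
  have hα3 : α3 = -(k1 * A1 + k3 * Z1 + k2 * A2 + k4 * Z2) := by
    linear_combination (h1 - hm1) / 6 - (h2 - hm2) / 12
  have hα1 : α1 = -(k1 * A1 + k3 * Z1) * (k2 * k4 * (A2 * Z2 - M2 ^ 2))
      - (k2 * A2 + k4 * Z2) * (k1 * k3 * (A1 * Z1 - M1 ^ 2))
      - (k1 * B1) * (- (k2 * k4 * B2 * Z2) + k2 * k4 * M2 * N2)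
      - (k2 * B2) * (- (k1 * k3 * B1 * Z1) + k1 * k3 * M1 * N1) := by
    linear_combination ((h2 - hm2) - 8 * (h1 - hm1)) / 12
  have hα0 : α0 = k1 * k3 * (A1 * Z1 - M1 ^ 2) * (k2 * k4 * (A2 * Z2 - M2 ^ 2))
      - (- (k1 * k3 * B1 * Z1) + k1 * k3 * M1 * N1)
        * (- (k2 * k4 * B2 * Z2) + k2 * k4 * M2 * N2) := by
    linear_combination -h0
  clear h0 h1 hm1 h2 hm2 hcoef
  -- basic sign facts
  have hb1 : (0:ℝ) ≤ |B1| := abs_nonneg _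
  have hb2 : (0:ℝ) ≤ |B2| := abs_nonneg _
  have hv1 : (0:ℝ) ≤ |B1 * Z1 - M1 * N1| := abs_nonneg _
  have hv2 : (0:ℝ) ≤ |B2 * Z2 - M2 * N2| := abs_nonneg _
  have hu1 : 0 < A1 * Z1 - M1 ^ 2 := lt_of_le_of_lt hv1 hIn2₁
  have hu2 : 0 < A2 * Z2 - M2 ^ 2 := lt_of_le_of_lt hv2 hIn2₂
  have hAZ1 : 0 < A1 * Z1 := by linarith [sq_nonneg M1]
  have hAZ2 : 0 < A2 * Z2 := by linarith [sq_nonneg M2]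
  have hA1le : A1 ≤ 0 := by linarith
  have hA2le : A2 ≤ 0 := by linarith
  have hA1 : A1 < 0 := by
    rcases hA1le.lt_or_eq with h | h
    · exact h
    · rw [h, zero_mul] at hAZ1; linarith
  have hA2 : A2 < 0 := by
    rcases hA2le.lt_or_eq with h | h
    · exact h
    · rw [h, zero_mul] at hAZ2; linarith
  have hZ1 : Z1 < 0 := by
    by_contra h
    push_neg at h
    linarith [mul_nonpos_of_nonpos_of_nonneg hA1le h]
  have hZ2 : Z2 < 0 := by
    by_contra h
    push_neg at h
    linarith [mul_nonpos_of_nonpos_of_nonneg hA2le h]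
  refine ⟨?_, ?_, ?_⟩
  · rw [hα3]
    linarith [mul_pos hk1 (neg_pos.2 hA1), mul_pos hk2 (neg_pos.2 hA2),
      mul_pos hk3 (neg_pos.2 hZ1), mul_pos hk4 (neg_pos.2 hZ2)]
  · rw [hα1]
    have e1 : -A1 * (A2 * Z2 - M2 ^ 2) + B1 * (B2 * Z2 - M2 * N2) ≥ 0 := by
      linarith [neg_abs_le (B1 * (B2 * Z2 - M2 * N2)),
        abs_mul B1 (B2 * Z2 - M2 * N2),
        mul_le_mul_of_nonneg_left (le_of_lt hIn2₂) hb1,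
        mul_le_mul_of_nonneg_right hIn3₁ hu2.le]
    have e2 : -A2 * (A1 * Z1 - M1 ^ 2) + B2 * (B1 * Z1 - M1 * N1) ≥ 0 := by
      linarith [neg_abs_le (B2 * (B1 * Z1 - M1 * N1)),
        abs_mul B2 (B1 * Z1 - M1 * N1),
        mul_le_mul_of_nonneg_left (le_of_lt hIn2₁) hb2,
        mul_le_mul_of_nonneg_right hIn3₂ hu1.le]
    have t1 : 0 < k3 * k2 * k4 * (-Z1 * (A2 * Z2 - M2 ^ 2)) :=
      mul_pos (by positivity) (mul_pos (neg_pos.2 hZ1) hu2)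
    have t2 : 0 < k4 * k1 * k3 * (-Z2 * (A1 * Z1 - M1 ^ 2)) :=
      mul_pos (by positivity) (mul_pos (neg_pos.2 hZ2) hu1)
    have t3 : 0 ≤ k1 * k2 * k4 * (-A1 * (A2 * Z2 - M2 ^ 2) + B1 * (B2 * Z2 - M2 * N2)) := by
      have : 0 < k1 * k2 * k4 := by positivity
      exact mul_nonneg this.le e1
    have t4 : 0 ≤ k2 * k1 * k3 * (-A2 * (A1 * Z1 - M1 ^ 2) + B2 * (B1 * Z1 - M1 * N1)) := by
      have : 0 < k2 * k1 * k3 := by positivity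
      exact mul_nonneg this.le e2
    linarith [t1, t2, t3, t4]
  · rw [hα0]
    have e : (A1 * Z1 - M1 ^ 2) * (A2 * Z2 - M2 ^ 2)
        > (B1 * Z1 - M1 * N1) * (B2 * Z2 - M2 * N2) := by
      linarith [le_abs_self ((B1 * Z1 - M1 * N1) * (B2 * Z2 - M2 * N2)),
        abs_mul (B1 * Z1 - M1 * N1) (B2 * Z2 - M2 * N2),
        mul_lt_mul'' hIn2₁ hIn2₂ hv1 hv2]
    have hk : 0 < k1 * k3 * (k2 * k4) := by positivity
    linarith [mul_lt_mul_of_pos_left e hk]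
end

section
/- Let a0, a1, c0, c1 be real numbers with a1 > |c1| and a0 > |c0|. Define α3 = 2·a1, α2 = a1² + 2·a0 − c1², α1 = 2·(a0·a1 − c0·c1) and α0 = a0² − c0² (so that (z² + a1·z + a0)² − (c1·z + c0)² = z⁴ + α3·z³ + α2·z² + α1·z + α0). Then α3 > 0, α1 > 0, α0 > 0 and α1·α2·α3 > α1² + α3²·α0. -/
/-- if `a1 > |c1|` and `a0 > |c0|`, then the coefficients
`α3 = 2 a1`, `α2 = a1² + 2 a0 - c1²`, `α1 = 2 (a0 a1 - c0 c1)`,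
`α0 = a0² - c0²` of `(z² + a1 z + a0)² - (c1 z + c0)²` satisfy
`α3 > 0`, `α1 > 0`, `α0 > 0` and `α1 α2 α3 > α1² + α3² α0`. -/
theorem stmt_14 (a0 a1 c0 c1 α0 α1 α2 α3 : ℝ)
    (ha1 : a1 > |c1|) (ha0 : a0 > |c0|)
    (hα3 : α3 = 2 * a1) (hα2 : α2 = a1 ^ 2 + 2 * a0 - c1 ^ 2)
    (hα1 : α1 = 2 * (a0 * a1 - c0 * c1)) (hα0 : α0 = a0 ^ 2 - c0 ^ 2) :
    (∀ z : ℝ, (z ^ 2 + a1 * z + a0) ^ 2 - (c1 * z + c0) ^ 2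
        = z ^ 4 + α3 * z ^ 3 + α2 * z ^ 2 + α1 * z + α0)
    ∧ α3 > 0 ∧ α1 > 0 ∧ α0 > 0
    ∧ α1 * α2 * α3 > α1 ^ 2 + α3 ^ 2 * α0 := by
  have hu : a1 - c1 > 0 := by have := abs_lt.mp ha1; linarith [this.2]
  have hv : a1 + c1 > 0 := by have := abs_lt.mp ha1; linarith [this.1]
  have hp : a0 - c0 > 0 := by have := abs_lt.mp ha0; linarith [this.2]
  have hq : a0 + c0 > 0 := by have := abs_lt.mp ha0; linarith [this.1]
  subst hα3 hα2 hα1 hα0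
  refine ⟨fun z => by ring, by linarith, ?_, ?_, ?_⟩
  · nlinarith [mul_pos hu hq, mul_pos hv hp]
  · nlinarith [mul_pos hp hq]
  · nlinarith [mul_nonneg (mul_pos hu hv).le (sq_nonneg (a0 - c0 - (a0 + c0))),
      mul_pos (mul_pos (mul_pos hu hu) hv) hq,
      mul_pos (mul_pos (mul_pos hu hv) hv) hp,
      mul_pos (mul_pos (mul_pos hu hv) hu) hv,
      mul_pos hu hv, mul_pos hp hq, sq_nonneg (a0 - c0 - (a0 + c0)),
      mul_nonneg (mul_pos hu hv).le (sq_nonneg (2*c0)),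
      mul_pos (mul_pos (mul_pos hu hv) hu) hp,
      mul_pos (mul_pos (mul_pos hu hv) hv) hq]
end

section
/- Let a0, a1, c0, c1 be real numbers with a1 > |c1| and a0 > |c0|. Then every complex root of the polynomial (z² + a1·z + a0)² − (c1·z + c0)² has negative real part. (This is the asymptotic stability of the equilibrium of the Cournot duopoly model with equal marginal costs for delay τ = 0, since the inequalities (In3) and (In2) yield a1 > |c1| and a0 > |c0| respectively.) -/
/-- A monic quadratic with positive real coefficients has roots with negative real part. -/
lemma quad_root_neg_re (b c : ℝ) (hb : 0 < b) (hc : 0 < c) (z : ℂ)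
    (h : z ^ 2 + (b : ℂ) * z + (c : ℂ) = 0) : z.re < 0 := by
  have h1 := congrArg Complex.re h
  have h2 := congrArg Complex.im h
  simp [pow_two, Complex.add_re, Complex.add_im, Complex.mul_re, Complex.mul_im] at h1 h2
  by_contra hx
  push_neg at hx
  rcases eq_or_ne z.im 0 with h0 | h0
  · rw [h0] at h1
    nlinarith [sq_nonneg z.re]
  · have h3 : z.im * (2 * z.re + b) = 0 := by linear_combination h2
    rcases mul_eq_zero.mp h3 with h4 | h4
    · exact h0 h4
    · linarith

/-- if `a1 > |c1|` and `a0 > |c0|`, then every complex root of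
`(z² + a1 z + a0)² - (c1 z + c0)²` has negative real part (asymptotic stability
of the Cournot duopoly model with equal marginal costs and zero delay). -/
theorem stmt_15 (a0 a1 c0 c1 : ℝ) (ha1 : a1 > |c1|) (ha0 : a0 > |c0|) :
    ∀ z : ℂ, (z ^ 2 + (a1 : ℂ) * z + (a0 : ℂ)) ^ 2 - ((c1 : ℂ) * z + (c0 : ℂ)) ^ 2 = 0 →
      z.re < 0 := by
  intro z h
  have habs1 := abs_lt.mp ha1
  have habs0 := abs_lt.mp ha0
  have hfac : (z ^ 2 + ((a1 + c1 : ℝ) : ℂ) * z + ((a0 + c0 : ℝ) : ℂ)) *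
      (z ^ 2 + ((a1 - c1 : ℝ) : ℂ) * z + ((a0 - c0 : ℝ) : ℂ)) = 0 := by
    push_cast
    linear_combination h
  rcases mul_eq_zero.mp hfac with h' | h'
  · exact quad_root_neg_re (a1 + c1) (a0 + c0) (by linarith) (by linarith) z h'
  · exact quad_root_neg_re (a1 - c1) (a0 - c0) (by linarith) (by linarith) z h'
end

section
/- Assume A·Z − M² > |B·Z − M·N| (inequality (In2)) and −A ≥ |B| (inequality (In3)). Then for every real ω, |p(iω)| > |g(iω)|. Consequently, for every τ ≥ 0 and every nonzero real ω, p(iω)² ≠ e^{−iωτ}·g(iω)²; that is, the quasipolynomial Q_τ(λ) = p(λ)² − e^{−λτ}·g(λ)² has no purely imaginary roots. -/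
/-- `p(λ) = λ² - (k1 A + k3 Z) λ + k1 k3 (A Z - M²)`, over `ℂ`. -/
noncomputable def pq (A Z M k1 k3 : ℝ) (l : ℂ) : ℂ :=
  l ^ 2 - ((k1 * A + k3 * Z : ℝ) : ℂ) * l + ((k1 * k3 * (A * Z - M ^ 2) : ℝ) : ℂ)

/-- `g(λ) = k1 B λ - k1 k3 B Z + k1 k3 M N`, over `ℂ`. -/
noncomputable def gq (Z M B N k1 k3 : ℝ) (l : ℂ) : ℂ :=
  ((k1 * B : ℝ) : ℂ) * l - ((k1 * k3 * B * Z : ℝ) : ℂ) + ((k1 * k3 * M * N : ℝ) : ℂ)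

/-!
On the imaginary axis `|p(iω)|² - |g(iω)|²` is a polynomial in `ω` which splits into
`k1²k3²((AZ - M²)² - (BZ - MN)²)`, positive by (In2), plus terms that are nonnegative
because `A² ≥ B²` by (In3) and `k1k3 > 0`. Taking norms, a unimodular factor such as
`e^{-iωτ}` cannot then make `p(iω)²` equal to `g(iω)²`.
-/

open Complex

lemma normSq_pq_ofReal_mul_I (A Z M k1 k3 ω : ℝ) :
    normSq (pq A Z M k1 k3 (ω * I)) =
      (k1 * k3 * (A * Z - M ^ 2) - ω ^ 2) ^ 2 + ((k1 * A + k3 * Z) * ω) ^ 2 := by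
  simp only [pq, normSq_apply, add_re, sub_re, add_im, sub_im, mul_re, mul_im, pow_two,
    ofReal_re, ofReal_im, I_re, I_im]
  ring

lemma normSq_gq_ofReal_mul_I (Z M B N k1 k3 ω : ℝ) :
    normSq (gq Z M B N k1 k3 (ω * I)) =
      (k1 * k3 * B * Z - k1 * k3 * M * N) ^ 2 + (k1 * B * ω) ^ 2 := by
  simp only [gq, normSq_apply, add_re, sub_re, add_im, sub_im, mul_re, mul_im,
    ofReal_re, ofReal_im, I_re, I_im]
  ring

lemma normSq_pq_sub_normSq_gq_ofReal_mul_I (A Z M B N k1 k3 ω : ℝ) :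
    normSq (pq A Z M k1 k3 (ω * I)) - normSq (gq Z M B N k1 k3 (ω * I)) =
      (k1 * k3) ^ 2 * ((A * Z - M ^ 2) ^ 2 - (B * Z - M * N) ^ 2) + ω ^ 4
        + k1 ^ 2 * (A ^ 2 - B ^ 2) * ω ^ 2 + (k3 * Z * ω) ^ 2 + 2 * (k1 * k3) * (M * ω) ^ 2 := by
  rw [normSq_pq_ofReal_mul_I, normSq_gq_ofReal_mul_I]
  ring

lemma norm_gq_lt_norm_pq_ofReal_mul_I {A Z M B N k1 k3 : ℝ} (hk1 : 0 < k1) (hk3 : 0 < k3)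
    (hIn2 : A * Z - M ^ 2 > |B * Z - M * N|) (hIn3 : -A ≥ |B|) (ω : ℝ) :
    ‖gq Z M B N k1 k3 (ω * I)‖ < ‖pq A Z M k1 k3 (ω * I)‖ := by
  have hD : 0 < (A * Z - M ^ 2) ^ 2 - (B * Z - M * N) ^ 2 :=
    sub_pos.2 (sq_lt_sq' (neg_lt_of_abs_lt hIn2) (lt_of_abs_lt hIn2))
  have hAB : 0 ≤ A ^ 2 - B ^ 2 :=
    sub_nonneg.2 (sq_le_sq.2 (hIn3.le.trans (neg_le_abs A)))
  have hk : 0 < k1 * k3 := mul_pos hk1 hk3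
  have hdiff := normSq_pq_sub_normSq_gq_ofReal_mul_I A Z M B N k1 k3 ω
  have : normSq (gq Z M B N k1 k3 (ω * I)) < normSq (pq A Z M k1 k3 (ω * I)) := by
    rw [← sub_pos, hdiff]
    positivity
  rw [norm_def, norm_def]
  exact Real.sqrt_lt_sqrt (normSq_nonneg _) this

lemma sq_ne_mul_sq_of_norm_lt {p g u : ℂ} (hu : ‖u‖ = 1) (h : ‖g‖ < ‖p‖) :
    p ^ 2 ≠ u * g ^ 2 := by
  intro heq
  have := congrArg norm heq
  rw [norm_mul, hu, one_mul, norm_pow, norm_pow] at this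
  exact h.ne' ((pow_left_inj₀ (norm_nonneg _) (norm_nonneg _) two_ne_zero).1 this)

/-- under (In2) and (In3), `|p(iω)| > |g(iω)|` for every real `ω`;
consequently the quasipolynomial `Q_τ(λ) = p(λ)² - e^{-λτ} g(λ)²` has no purely
imaginary roots for any delay `τ ≥ 0`. -/
theorem stmt_16 (A Z M B N k1 k3 : ℝ) (hk1 : 0 < k1) (hk3 : 0 < k3)
    (hIn2 : A * Z - M ^ 2 > |B * Z - M * N|) (hIn3 : -A ≥ |B|) :
    (∀ ω : ℝ, ‖pq A Z M k1 k3 ((ω : ℂ) * Complex.I)‖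
        > ‖gq Z M B N k1 k3 ((ω : ℂ) * Complex.I)‖)
    ∧ ∀ τ : ℝ, 0 ≤ τ → ∀ ω : ℝ, ω ≠ 0 →
        (pq A Z M k1 k3 ((ω : ℂ) * Complex.I)) ^ 2
          ≠ Complex.exp (-((ω : ℂ) * Complex.I * τ))
              * (gq Z M B N k1 k3 ((ω : ℂ) * Complex.I)) ^ 2 := by
  have hlt := norm_gq_lt_norm_pq_ofReal_mul_I hk1 hk3 hIn2 hIn3
  refine ⟨hlt, fun τ _ ω _ => sq_ne_mul_sq_of_norm_lt ?_ (hlt ω)⟩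
  rw [norm_exp]
  simp
end

section
/- Assume A·Z − M² > |B·Z − M·N| (inequality (In2)) and −A ≥ |B| (inequality (In3)). Then for every τ ≥ 0 and every λ ∈ ℂ with Re λ ≥ 0, p(λ)² ≠ e^{−λτ}·g(λ)². In other words, for every value of the delay τ ≥ 0 the quasipolynomial Q_τ(λ) = p(λ)² − e^{−λτ}·g(λ)² of the Cournot duopoly model with equal marginal costs has no roots in the closed right half-plane, so the equilibrium is asymptotically stable independently of the delay. -/
open Complex

lemma normSq_quadratic_sub_normSq_linear (s d b e : ℝ) (z : ℂ) :
    normSq (z ^ 2 + s * z + d) - normSq (b * z + e) =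
      ((z.re ^ 2 + s * z.re + d) + (b * z.re + e)) * ((z.re ^ 2 + s * z.re + d) - (b * z.re + e)) +
        z.im ^ 2 * (2 * z.re ^ 2 + 2 * s * z.re + s ^ 2 - 2 * d - b ^ 2) + z.im ^ 4 := by
  simp only [normSq_apply, pow_two, add_re, add_im, mul_re, mul_im, ofReal_re, ofReal_im]
  ring

lemma norm_linear_lt_norm_quadratic {c₁ c₂ d b e : ℝ} (hb : |b| ≤ c₁) (hc₂ : 0 < c₂)
    (hd : d ≤ c₁ * c₂) (he : |e| < d) {z : ℂ} (hz : 0 ≤ z.re) :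
    ‖(b * z + e : ℂ)‖ < ‖(z ^ 2 + (c₁ + c₂ : ℝ) * z + d : ℂ)‖ := by
  obtain ⟨hb₁, hb₂⟩ := abs_le.mp hb
  obtain ⟨he₁, he₂⟩ := abs_lt.mp he
  set x := z.re
  have hc₁ : 0 ≤ c₁ := (abs_nonneg b).trans hb
  have hsum : 0 < x ^ 2 + (c₁ + c₂ + b) * x + (d + e) := by
    nlinarith [mul_nonneg hz (by linarith : 0 ≤ c₁ + c₂ + b)]
  have hdiff : 0 < x ^ 2 + (c₁ + c₂ - b) * x + (d - e) := by
    nlinarith [mul_nonneg hz (by linarith : 0 ≤ c₁ + c₂ - b)]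
  have hα : 0 < 2 * x ^ 2 + 2 * (c₁ + c₂) * x + (c₁ + c₂) ^ 2 - 2 * d - b ^ 2 := by
    nlinarith [mul_nonneg hz (by linarith : 0 ≤ c₁ + c₂), sq_abs b, abs_nonneg b]
  have key := normSq_quadratic_sub_normSq_linear (c₁ + c₂) d b e z
  rw [← sq_lt_sq₀ (norm_nonneg _) (norm_nonneg _), ← normSq_eq_norm_sq, ← normSq_eq_norm_sq]
  nlinarith [mul_pos hsum hdiff, mul_nonneg (sq_nonneg z.im) hα.le, pow_two_nonneg (z.im ^ 2)]

lemma norm_exp_neg_mul_le_one {l : ℂ} (hl : 0 ≤ l.re) {τ : ℝ} (hτ : 0 ≤ τ) :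
    ‖exp (-(l * τ))‖ ≤ 1 := by
  rw [norm_exp, Real.exp_le_one_iff]
  simpa using mul_nonneg hl hτ

/-- under (In2) and (In3), for every delay `τ ≥ 0` the
quasipolynomial `Q_τ(λ) = p(λ)² - e^{-λτ} g(λ)²` has no roots in the closed
right half-plane: asymptotic stability independent of delay. -/
theorem stmt_17 (A Z M B N k1 k3 : ℝ) (hk1 : 0 < k1) (hk3 : 0 < k3)
    (hIn2 : A * Z - M ^ 2 > |B * Z - M * N|) (hIn3 : -A ≥ |B|) :
    ∀ τ : ℝ, 0 ≤ τ → ∀ l : ℂ, 0 ≤ l.re →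
      (pq A Z M k1 k3 l) ^ 2 ≠ Complex.exp (-(l * τ)) * (gq Z M B N k1 k3 l) ^ 2 := by
  intro τ hτ l hl heq
  have hAZ : M ^ 2 < A * Z := by linarith [abs_nonneg (B * Z - M * N)]
  have hA : A < 0 := lt_of_le_of_ne (by linarith [abs_nonneg B]) (by rintro rfl; nlinarith)
  have hZ : Z < 0 := by nlinarith
  have hk : 0 < k1 * k3 := mul_pos hk1 hk3
  have hlt := norm_linear_lt_norm_quadratic (c₁ := -(k1 * A)) (c₂ := -(k3 * Z))
    (d := k1 * k3 * (A * Z - M ^ 2)) (b := k1 * B) (e := k1 * k3 * (M * N - B * Z))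
    (by rw [abs_mul, abs_of_pos hk1]; nlinarith) (by nlinarith) (by nlinarith)
    (by rw [abs_mul, abs_of_pos hk, abs_sub_comm]; nlinarith) hl
  have hp : pq A Z M k1 k3 l = l ^ 2 + ((-(k1 * A) + -(k3 * Z) : ℝ) : ℂ) * l +
      ((k1 * k3 * (A * Z - M ^ 2) : ℝ) : ℂ) := by
    simp only [pq]; push_cast; ring
  have hg : gq Z M B N k1 k3 l =
      ((k1 * B : ℝ) : ℂ) * l + ((k1 * k3 * (M * N - B * Z) : ℝ) : ℂ) := by
    simp only [gq]; push_cast; ring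
  rw [← hp, ← hg] at hlt
  have hnorm := congrArg norm heq
  rw [norm_mul, norm_pow, norm_pow] at hnorm
  refine lt_irrefl (‖pq A Z M k1 k3 l‖ ^ 2) ?_
  calc ‖pq A Z M k1 k3 l‖ ^ 2 = ‖exp (-(l * τ))‖ * ‖gq Z M B N k1 k3 l‖ ^ 2 := hnorm
    _ ≤ ‖gq Z M B N k1 k3 l‖ ^ 2 :=
      mul_le_of_le_one_left (sq_nonneg _) (norm_exp_neg_mul_le_one hl hτ)
    _ < ‖pq A Z M k1 k3 l‖ ^ 2 := by gcongr
end
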